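/- arXiv:2001.03832 — 4 statements merged into one kernel-verified Lean document; each statement's English description precedes it below -/
import Mathlib

section
/- For any nonempty index 𝐤=(k₁,…,k_r), the identity Σ_{m=0}^{r−1} (−1)^m Σ_{□ patterns with exactly m plus signs} (k₁□k₂□⋯□k_r)⋆ = (k₁,…,k_r) holds in ℛ, where the inner sum is over all assignments □ of comma/plus to the r−1 separators between consecutive entries having exactly m plus signs, (k₁□⋯□k_r) denotes the index obtained by adding together the entries joined by plus signs, and ⋆ is applied to that merged index. -/
/-- `ℛ`, the free `ℚ`-vector space on the set of indices (realized as lists of naturals;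
indices are the lists all of whose entries are positive). -/
abbrev RSp : Type := List ℕ →₀ ℚ

/-- Merge an interleaved sequence `a □ b₁ □ b₂ ⋯`: a `true` separator is a plus sign
(the adjacent entries are added together), a `false` separator is a comma. -/
def mergeP : ℕ → List (Bool × ℕ) → List ℕ
  | a, [] => [a]
  | a, (true, b) :: rest => mergeP (a + b) rest
  | a, (false, b) :: rest => a :: mergeP b rest

/-- `𝐤⋆ ∈ ℛ`: the sum over all `2^{r−1}` comma/plus patterns of the merged index. -/
noncomputable def starIdx : List ℕ → RSp
  | [] => 0
  | a :: rest =>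
      ∑ s : Fin rest.length → Bool,
        Finsupp.single (mergeP a ((List.ofFn s).zip rest)) (1 : ℚ)

/-- The sum, over all comma/plus patterns of `𝐤` with exactly `m` plus signs,
of `(merged index)⋆ ∈ ℛ`. -/
noncomputable def starIdxM : List ℕ → ℕ → RSp
  | [], _ => 0
  | a :: rest, m =>
      ∑ s : Fin rest.length → Bool,
        if (List.ofFn s).count true = m then starIdx (mergeP a ((List.ofFn s).zip rest)) else 0

/-- The sum, over all comma/plus patterns of `𝐤` with exactly `m` plus signs,
of the merged index, as an element of `ℛ`. -/
noncomputable def mergeM : List ℕ → ℕ → RSp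
  | [], _ => 0
  | a :: rest, m =>
      ∑ s : Fin rest.length → Bool,
        if (List.ofFn s).count true = m then
          Finsupp.single (mergeP a ((List.ofFn s).zip rest)) (1 : ℚ) else 0

/-- Given a cyclic comma/plus pattern `s` on `𝐤` (`s[i]` sits between the `i`-th and the
`(i+1)`-st entry, cyclically) having at least one comma, merge the cyclically adjacent
entries joined by plus signs, reading the cycle linearly starting right after the first
comma (this fixes a choice of cyclic rotation of the merged index). -/
def cycMerge (K : List ℕ) (s : List Bool) : List ℕ :=
  match K.rotate (s.idxOf false + 1) with
  | [] => []
  | a :: rest => mergeP a ((s.rotate (s.idxOf false + 1)).zip rest)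

/-- `S_m(𝐤) ∈ ℛ`: the sum, over all cyclic comma/plus patterns of `𝐤` with exactly `m`
plus signs, of (a chosen cyclic rotation of) the cyclically merged index. -/
noncomputable def SmDef (K : List ℕ) (m : ℕ) : RSp :=
  ∑ s : Fin K.length → Bool,
    if (List.ofFn s).count true = m then
      Finsupp.single (cycMerge K (List.ofFn s)) (1 : ℚ) else 0

/-- For `M = Σ_𝐤 c_𝐤·𝐤 ∈ ℛ`, the weighted sum `Σ_{𝐤 ∈ M} f(𝐤) := Σ_𝐤 c_𝐤 • f(𝐤)`;
here used with `M = S_m(𝐤)`, giving the notation `Σ_{(l₁,…,l_{r−m}) ∈ S_m(𝐤)} f(l)`. -/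
noncomputable def Ssum (K : List ℕ) (m : ℕ) (f : List ℕ → RSp) : RSp :=
  Finsupp.sum (SmDef K m) fun l c => c • f l

/-!
Splitting a comma/plus pattern at its first separator gives the recursion
`(a, b, 𝐥)⋆ = (a + b, 𝐥)⋆ + a · (b, 𝐥)⋆` for the star, and the same split turns the signed
sum `Σ_□ (−1)^{#plus} (a □ 𝐥)⋆` into a difference of two shorter signed sums. Induction on the
depth then shows that everything cancels except `𝐤` itself: this is Möbius inversion of
`𝐤⋆ = Σ_□ (k₁ □ ⋯ □ k_r)` on the Boolean lattice of patterns.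
-/

lemma Fintype.sum_bool_fun_succ {M : Type*} [AddCommMonoid M] (n : ℕ)
    (f : (Fin (n + 1) → Bool) → M) :
    ∑ s, f s = (∑ s, f (Fin.cons false s)) + ∑ s, f (Fin.cons true s) := by
  rw [← Fintype.sum_equiv (Fin.consEquiv fun _ => Bool) (fun p => f (Fin.cons p.1 p.2)) _
      fun _ => rfl, Fintype.sum_prod_type, Fintype.sum_bool, add_comm]

lemma starIdx_singleton (a : ℕ) : starIdx [a] = Finsupp.single [a] 1 := by
  simp [starIdx, mergeP]

lemma starIdx_cons_cons (a b : ℕ) (l : List ℕ) :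
    starIdx (a :: b :: l)
      = starIdx ((a + b) :: l) + Finsupp.mapDomain (List.cons a) (starIdx (b :: l)) := by
  simp only [starIdx, List.length_cons, Fintype.sum_bool_fun_succ, List.ofFn_cons,
    List.zip_cons_cons, mergeP,
    Finsupp.mapDomain_finsetSum, Finsupp.mapDomain_single]
  exact add_comm _ _

section AltMergeSum

variable {M N : Type*} [AddCommGroup M] [Module ℚ M] [AddCommGroup N] [Module ℚ N]

/-- `Σ_□ (−1)^{#plus} f(a □ l₁ □ ⋯ □ l_n)` over all comma/plus patterns `□`. -/
noncomputable def altMergeSum (f : List ℕ → M) (a : ℕ) (l : List ℕ) : M :=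
  ∑ s : Fin l.length → Bool,
    (-1 : ℚ) ^ (List.ofFn s).count true • f (mergeP a ((List.ofFn s).zip l))

lemma altMergeSum_nil (f : List ℕ → M) (a : ℕ) : altMergeSum f a [] = f [a] := by
  simp [altMergeSum, mergeP]

lemma altMergeSum_cons (f : List ℕ → M) (a c : ℕ) (l : List ℕ) :
    altMergeSum f a (c :: l)
      = altMergeSum (fun x => f (a :: x)) c l - altMergeSum f (a + c) l := by
  simp only [altMergeSum, List.length_cons, Fintype.sum_bool_fun_succ, List.ofFn_cons,
    List.zip_cons_cons, mergeP, List.count_cons_self, List.count_cons_of_ne Bool.false_ne_true,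
    pow_succ, mul_neg_one, neg_smul, Finset.sum_neg_distrib, sub_eq_add_neg]

lemma altMergeSum_add (f g : List ℕ → M) (a : ℕ) (l : List ℕ) :
    altMergeSum (f + g) a l = altMergeSum f a l + altMergeSum g a l := by
  simp only [altMergeSum, Pi.add_apply, smul_add, Finset.sum_add_distrib]

lemma altMergeSum_linearMap_comp (φ : M →ₗ[ℚ] N) (f : List ℕ → M) (a : ℕ) (l : List ℕ) :
    altMergeSum (φ ∘ f) a l = φ (altMergeSum f a l) := by
  simp only [altMergeSum, Function.comp_apply, map_sum, map_smul]

end AltMergeSum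

lemma altMergeSum_starIdx_cons (l : List ℕ) (a b : ℕ) :
    altMergeSum (fun x => starIdx (a :: x)) b l
      = Finsupp.single (a :: b :: l) 1 + Finsupp.single ((a + b) :: l) 1 := by
  induction l generalizing a b with
  | nil =>
    rw [altMergeSum_nil, starIdx_cons_cons, starIdx_singleton, starIdx_singleton,
      Finsupp.mapDomain_single, add_comm]
  | cons c l ih =>
    have hsplit : (fun x => starIdx (a :: b :: x))
        = (fun x => starIdx ((a + b) :: x))
          + Finsupp.lmapDomain ℚ ℚ (List.cons a) ∘ fun x => starIdx (b :: x) := by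
      funext x
      exact starIdx_cons_cons a b x
    rw [altMergeSum_cons, hsplit, altMergeSum_add, altMergeSum_linearMap_comp, ih, ih, ih,
      Finsupp.lmapDomain_apply, Finsupp.mapDomain_add, Finsupp.mapDomain_single,
      Finsupp.mapDomain_single, add_assoc a b c]
    abel

lemma altMergeSum_starIdx (l : List ℕ) (a : ℕ) :
    altMergeSum starIdx a l = Finsupp.single (a :: l) 1 := by
  induction l generalizing a with
  | nil => rw [altMergeSum_nil, starIdx_singleton]
  | cons c l ih =>
    rw [altMergeSum_cons, altMergeSum_starIdx_cons, ih, add_sub_cancel_right]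

lemma sum_neg_one_pow_smul_starIdxM (a : ℕ) (l : List ℕ) :
    ∑ m ∈ Finset.range (l.length + 1), (-1 : ℚ) ^ m • starIdxM (a :: l) m
      = altMergeSum starIdx a l := by
  simp only [starIdxM, Finset.smul_sum, smul_ite, smul_zero]
  rw [Finset.sum_comm]
  refine Finset.sum_congr rfl fun s _ => ?_
  have hcount : (List.ofFn s).count true < l.length + 1 :=
    Nat.lt_succ_of_le (List.count_le_length.trans_eq (List.length_ofFn))
  rw [Finset.sum_ite_eq, if_pos (Finset.mem_range.2 hcount)]

theorem alternating_star_sum_eq_single_general (K : List ℕ) (hne : K ≠ []) :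
    ∑ m ∈ Finset.range K.length, (-1 : ℚ) ^ m • starIdxM K m
      = Finsupp.single K (1 : ℚ) := by
  obtain ⟨a, l, rfl⟩ := List.exists_cons_of_ne_nil hne
  rw [List.length_cons, sum_neg_one_pow_smul_starIdxM, altMergeSum_starIdx]

/-- **Lemma 6.2** of Hirose–Murahara–Ono: for a nonempty index `𝐤 = (k₁,…,k_r)`,
`Σ_{m=0}^{r−1} (−1)^m Σ_{□ patterns with exactly m plus signs} (k₁□⋯□k_r)⋆ = (k₁,…,k_r)`
holds in `ℛ`. -/
theorem alternating_star_sum_eq_single (K : List ℕ) (hne : K ≠ [])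
    (hpos : ∀ x ∈ K, 0 < x) :
    ∑ m ∈ Finset.range K.length, (-1 : ℚ) ^ m • starIdxM K m
      = Finsupp.single K (1 : ℚ) :=
  alternating_star_sum_eq_single_general K hne
end

section
/- For a nonempty index 𝐤=(k₁,…,k_r) and an integer 0 ≤ m ≤ r−1, the following identity holds in ℛ: Σ_{i=1}^{r−m} Σ_{(l₁,…,l_{r−m}) ∈ S_m(𝐤)} (l_{i+1},…,l_{r−m},l₁,…,l_i) = Σ_{i=1}^{r} Σ_{□ patterns} (merged index of (k_{i+1},…,k_r,k₁,…,k_i) under □), where on the right the inner sum is over all assignments □ of comma/plus to the r−1 separators of the rotated tuple (k_{i+1},…,k_r,k₁,…,k_i) having exactly m plus signs, and the merged index is obtained by adding together entries joined by plus signs. -/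
/-!
Both sides count pairs (cyclic comma/plus pattern on `𝐤` with `m` plus signs, one of its commas).
Reading the cycle linearly, starting right after the `j`-th comma, gives the chosen representative
of the merged index rotated by `j`; as `j` runs over the `r - m` commas this produces the `r - m`
rotations on the left. Fixing instead the position of the comma, the patterns with a comma there
are exactly the linear patterns on the corresponding rotation of `𝐤`, which gives the right.
-/

open Finset

theorem Function.Periodic.sum_range_add {M : Type*} [AddCommMonoid M] {f : ℕ → M} {n : ℕ}
    (hf : Function.Periodic f n) (a : ℕ) :
    ∑ k ∈ range n, f (k + a) = ∑ k ∈ range n, f k := by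
  induction a with
  | zero => rfl
  | succ a ih =>
    rw [← ih]
    rcases n with _ | n
    · rfl
    · rw [sum_range_succ, sum_range_succ' (fun k => f (k + a))]
      simp only [add_right_comm _ 1 a, add_assoc, zero_add]
      rw [show n + (a + 1) = a + (n + 1) by omega, hf a]

theorem Finset.sum_Icc_one_eq_sum_range {M : Type*} [AddCommMonoid M] (f : ℕ → M) (n : ℕ) :
    ∑ i ∈ Icc 1 n, f i = ∑ k ∈ range n, f (k + 1) := by
  rw [← Ico_add_one_right_eq_Icc, sum_Ico_eq_sum_range, Nat.add_sub_cancel]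
  simp only [add_comm 1]

theorem List.getLast?_rotate_succ {α : Type*} {l : List α} {k : ℕ} (hk : k < l.length) :
    (l.rotate (k + 1)).getLast? = l[k]? := by
  rw [getLast?_eq_getElem?, length_rotate, getElem?_rotate (by omega)]
  congr 1
  rw [show l.length - 1 + (k + 1) = k + l.length by omega, Nat.add_mod_right,
    Nat.mod_eq_of_lt hk]

theorem List.sum_range_ite_count_take {α M : Type*} [DecidableEq α] [AddCommMonoid M]
    (l : List α) (b : α) (g : ℕ → M) :
    ∑ k ∈ Finset.range l.length, (if l[k]? = some b then g ((l.take (k + 1)).count b) else 0)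
      = ∑ d ∈ Finset.range (l.count b), g (d + 1) := by
  induction l using List.reverseRecOn with
  | nil => simp
  | append_singleton l x ih =>
    rw [length_append, length_singleton, Finset.sum_range_succ, count_append]
    have hprefix : ∀ k ∈ Finset.range l.length,
        (if (l ++ [x])[k]? = some b then g (((l ++ [x]).take (k + 1)).count b) else 0)
          = if l[k]? = some b then g ((l.take (k + 1)).count b) else 0 := by
      intro k hk
      have hk := Finset.mem_range.mp hk
      rw [getElem?_append_left hk, take_append_of_le_length hk]
    rw [Finset.sum_congr rfl hprefix, ih, take_of_length_le (by simp)]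
    by_cases hx : x = b
    · subst hx
      simp [Finset.sum_range_succ]
    · simp [hx]

theorem Fintype.sum_ofFn_rotate {α M : Type*} [Fintype α] [AddCommMonoid M] (n k : ℕ)
    (f : List α → M) :
    ∑ s : Fin n → α, f ((List.ofFn s).rotate k) = ∑ s : Fin n → α, f (List.ofFn s) := by
  let e : (Fin n → α) → (Fin n → α) := fun s i => ((List.ofFn s).rotate k)[i]'(by simp)
  have he : ∀ s, List.ofFn (e s) = (List.ofFn s).rotate k := fun s =>
    List.ext_getElem (by simp) (by simp [e])
  have hinj : e.Injective := fun s t hst =>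
    List.ofFn_injective (List.rotate_injective k (by simpa only [he] using congrArg List.ofFn hst))
  have := (Finite.injective_iff_bijective.mp hinj).sum_comp (f ∘ List.ofFn)
  simpa only [Function.comp_apply, he] using this

theorem Fintype.sum_ofFn_succ_last {α M : Type*} [Fintype α] [AddCommMonoid M] (n : ℕ)
    (f : List α → M) :
    ∑ s : Fin (n + 1) → α, f (List.ofFn s)
      = ∑ s : Fin n → α, ∑ b : α, f (List.ofFn s ++ [b]) := by
  rw [← (Fin.snocEquiv fun _ => α).sum_comp, Fintype.sum_prod_type, Finset.sum_comm]
  simp only [Fin.snocEquiv_apply, List.ofFn_succ_last, Fin.snoc_castSucc, Fin.snoc_last]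

theorem mergeP_append_false (a b : ℕ) (l₁ l₂ : List (Bool × ℕ)) :
    mergeP a (l₁ ++ (false, b) :: l₂) = mergeP a l₁ ++ mergeP b l₂ := by
  induction l₁ generalizing a with
  | nil => simp [mergeP]
  | cons p l₁ ih =>
    obtain ⟨_ | _, c⟩ := p <;> simp [mergeP, ih]

theorem length_mergeP (a : ℕ) (l : List (Bool × ℕ)) :
    (mergeP a l).length = (l.map Prod.fst).count false + 1 := by
  induction l generalizing a with
  | nil => simp [mergeP]
  | cons p l ih =>
    obtain ⟨_ | _, c⟩ := p <;> simp [mergeP, ih]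

-- The separator after the last entry of `K`, which closes the cycle, is dropped by `zip`.
def linMerge : List ℕ → List Bool → List ℕ
  | [], _ => []
  | a :: rest, s => mergeP a (s.zip rest)

theorem linMerge_append_of_length {K : List ℕ} {s : List Bool} (h : s.length + 1 = K.length)
    (t : List Bool) : linMerge K (s ++ t) = linMerge K s := by
  obtain _ | ⟨a, rest⟩ := K
  · simp at h
  · have hzip :=
      List.zip_append (l₁ := s) (r₁ := t) (l₂ := rest) (r₂ := []) (by simpa using h)
    simp only [List.append_nil, List.zip_nil_right] at hzip
    simp only [linMerge, hzip]

theorem linMerge_append {A B : List ℕ} {sA : List Bool} (sB : List Bool)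
    (hA : sA.length = A.length) (hlast : sA.getLastD false = false) :
    linMerge (A ++ B) (sA ++ sB) = linMerge A sA ++ linMerge B sB := by
  rcases List.eq_nil_or_concat' sA with rfl | ⟨u, x, rfl⟩
  · rw [List.eq_nil_of_length_eq_zero hA.symm]
    rfl
  obtain rfl : x = false := by simpa using hlast
  obtain _ | ⟨a, A'⟩ := A
  · simp at hA
  have hu : u.length + 1 = (a :: A').length := by simpa using hA
  rw [linMerge_append_of_length hu [false], List.append_assoc]
  obtain _ | ⟨b, B'⟩ := B
  · rw [linMerge_append_of_length (by simpa using hu), linMerge, List.append_nil, List.append_nil]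
  · have hu' : u.length = A'.length := by simpa using hA
    simp only [linMerge, List.cons_append, List.zip_append hu', List.zip_cons_cons,
      List.nil_append, mergeP_append_false]

theorem length_linMerge {K : List ℕ} {s : List Bool} (hs : s.length = K.length)
    (hlast : s.getLastD false = false) : (linMerge K s).length = s.count false := by
  rcases List.eq_nil_or_concat' s with rfl | ⟨u, x, rfl⟩
  · rw [List.eq_nil_of_length_eq_zero hs.symm]
    rfl
  obtain rfl : x = false := by simpa using hlast
  obtain _ | ⟨a, rest⟩ := K
  · simp at hs
  have hu : u.length + 1 = (a :: rest).length := by simpa using hs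
  rw [linMerge_append_of_length hu, linMerge, length_mergeP,
    List.map_fst_zip (by simp at hu; omega)]
  simp

theorem linMerge_rotate_succ {K : List ℕ} {s : List Bool} {k : ℕ} (hs : s.length = K.length)
    (hlast : s.getLastD false = false) (hk : s[k]? = some false) :
    linMerge (K.rotate (k + 1)) (s.rotate (k + 1))
      = (linMerge K s).rotate ((s.take (k + 1)).count false) := by
  have hks : k + 1 ≤ s.length := (List.getElem?_eq_some_iff.mp hk).1
  have hlenA : (s.take (k + 1)).length = (K.take (k + 1)).length := by simp [hs]
  have hlenB : (s.drop (k + 1)).length = (K.drop (k + 1)).length := by simp [hs]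
  have hlastA : (s.take (k + 1)).getLastD false = false := by simp [List.getLast?_take, hk]
  have hlastB : (s.drop (k + 1)).getLastD false = false := by
    rw [List.getLastD_eq_getLast?, List.getLast?_drop]
    split_ifs
    · rfl
    · simpa using hlast
  have hsplit : linMerge K s = linMerge (K.take (k + 1)) (s.take (k + 1))
      ++ linMerge (K.drop (k + 1)) (s.drop (k + 1)) := by
    conv_lhs => rw [← List.take_append_drop (k + 1) K, ← List.take_append_drop (k + 1) s]
    exact linMerge_append _ hlenA hlastA
  rw [List.rotate_eq_drop_append_take (hs ▸ hks), List.rotate_eq_drop_append_take hks,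
    linMerge_append _ hlenB hlastB, hsplit, ← length_linMerge hlenA hlastA,
    List.rotate_append_length_eq]

-- The linear reading of the cycle from entry `k` on, counted when the separator closing it is a
-- comma.
noncomputable def readingAt (K : List ℕ) (s : List Bool) (k : ℕ) : RSp :=
  if (s.rotate k).getLast? = some false then
    Finsupp.single (linMerge (K.rotate k) (s.rotate k)) 1 else 0

noncomputable def cycReadings (K : List ℕ) (s : List Bool) : RSp :=
  ∑ k ∈ range K.length, readingAt K s k

theorem readingAt_rotate (K : List ℕ) (s : List Bool) (a k : ℕ) :
    readingAt (K.rotate a) (s.rotate a) k = readingAt K s (a + k) := by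
  simp only [readingAt, List.rotate_rotate]

theorem readingAt_periodic {K : List ℕ} {s : List Bool} (hs : s.length = K.length) :
    Function.Periodic (readingAt K s) K.length := fun k => by
  rw [readingAt, readingAt, ← List.rotate_mod K, ← List.rotate_mod s, hs, Nat.add_mod_right,
    ← hs, List.rotate_mod, hs, List.rotate_mod]

theorem cycReadings_rotate {K : List ℕ} {s : List Bool} (hs : s.length = K.length) (a : ℕ) :
    cycReadings (K.rotate a) (s.rotate a) = cycReadings K s := by
  simp only [cycReadings, List.length_rotate, readingAt_rotate, add_comm a]
  exact (readingAt_periodic hs).sum_range_add a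

theorem cycReadings_eq_sum_rotate {K : List ℕ} {s : List Bool} (hs : s.length = K.length)
    (hlast : s.getLastD false = false) :
    cycReadings K s
      = ∑ d ∈ range (s.count false), Finsupp.single ((linMerge K s).rotate (d + 1)) 1 := by
  rw [cycReadings, ← (readingAt_periodic hs).sum_range_add 1, ← hs]
  refine (sum_congr rfl fun k hk => ?_).trans (List.sum_range_ite_count_take s false
    fun d => Finsupp.single ((linMerge K s).rotate d) 1)
  rw [readingAt, List.getLast?_rotate_succ (mem_range.mp hk)]
  split_ifs with hcomma
  · rw [linMerge_rotate_succ hs hlast hcomma]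
  · rfl

theorem sum_rotate_cycMerge_eq_cycReadings {K : List ℕ} {s : List Bool}
    (hs : s.length = K.length) :
    ∑ i ∈ Icc 1 (s.count false), Finsupp.single ((cycMerge K s).rotate i) (1 : ℚ)
      = cycReadings K s := by
  by_cases hmem : false ∈ s
  · set p := s.idxOf false + 1
    have hp : (s.rotate p).getLast? = some false := by
      rw [List.getLast?_rotate_succ (List.idxOf_lt_length_iff.mpr hmem), List.getElem?_idxOf hmem]
    have hcyc : cycMerge K s = linMerge (K.rotate p) (s.rotate p) := by
      unfold cycMerge
      cases K.rotate p <;> rfl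
    rw [← cycReadings_rotate hs p, cycReadings_eq_sum_rotate (by simpa) (by simp [hp]),
      sum_Icc_one_eq_sum_range, (List.rotate_perm s p).count_eq, hcyc]
  · rw [List.count_eq_zero.mpr hmem, Icc_eq_empty_of_lt zero_lt_one, sum_empty, eq_comm]
    refine sum_eq_zero fun k _ => if_neg fun hlast => hmem ?_
    exact List.mem_rotate.mp (List.mem_of_getLast? hlast)

theorem mergeM_eq_sum_getLast {K : List ℕ} (hK : K ≠ []) (m : ℕ) :
    mergeM K m = ∑ s : Fin K.length → Bool,
      if (List.ofFn s).count true = m ∧ (List.ofFn s).getLast? = some false then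
        Finsupp.single (linMerge K (List.ofFn s)) 1 else 0 := by
  obtain _ | ⟨a, rest⟩ := K
  · exact absurd rfl hK
  refine (sum_congr rfl fun s _ => ?_).trans (Fintype.sum_ofFn_succ_last rest.length
    fun l => if l.count true = m ∧ l.getLast? = some false then
      Finsupp.single (linMerge (a :: rest) l) 1 else 0).symm
  have hlen : (List.ofFn s).length + 1 = (a :: rest).length := by simp
  change (if (List.ofFn s).count true = m then
    Finsupp.single (linMerge (a :: rest) (List.ofFn s)) 1 else 0) = _
  simp [List.count_append, linMerge_append_of_length hlen]

theorem sum_readingAt_eq_mergeM {K : List ℕ} (hK : K ≠ []) (m k : ℕ) :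
    ∑ s : Fin K.length → Bool,
      (if (List.ofFn s).count true = m then readingAt K (List.ofFn s) k else 0)
      = mergeM (K.rotate k) m := by
  rw [mergeM_eq_sum_getLast (by simpa using hK), List.length_rotate]
  refine (sum_congr rfl fun s _ => ?_).trans (Fintype.sum_ofFn_rotate K.length k
    fun l => if l.count true = m ∧ l.getLast? = some false then
      Finsupp.single (linMerge (K.rotate k) l) 1 else 0)
  rw [readingAt, (List.rotate_perm _ k).count_eq, ite_and]

theorem Ssum_eq_sum (K : List ℕ) (m : ℕ) (f : List ℕ → RSp) :
    Ssum K m f = ∑ s : Fin K.length → Bool,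
      if (List.ofFn s).count true = m then f (cycMerge K (List.ofFn s)) else 0 := by
  rw [Ssum, ← Finsupp.linearCombination_apply, SmDef, map_sum]
  refine sum_congr rfl fun s _ => ?_
  split_ifs
  · rw [Finsupp.linearCombination_single, one_smul]
  · exact map_zero _

theorem Sm_rotation_sum_general (K : List ℕ) (m : ℕ) :
    (∑ i ∈ Finset.Icc 1 (K.length - m),
        Ssum K m fun l => Finsupp.single (l.rotate i) (1 : ℚ))
      = ∑ i ∈ Finset.Icc 1 K.length, mergeM (K.rotate i) m := by
  have hperiodic : Function.Periodic (fun k => mergeM (K.rotate k) m) K.length := fun k => by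
    simp only [← List.rotate_mod K (k + K.length), Nat.add_mod_right, List.rotate_mod]
  calc _ = ∑ s : Fin K.length → Bool,
        if (List.ofFn s).count true = m then cycReadings K (List.ofFn s) else 0 := by
        simp only [Ssum_eq_sum]
        rw [sum_comm]
        refine sum_congr rfl fun s _ => ?_
        simp only [sum_ite_irrel, sum_const_zero]
        split_ifs with hm
        · have hcount := List.count_false_add_count_true (List.ofFn s)
          rw [List.length_ofFn, hm] at hcount
          rw [← sum_rotate_cycMerge_eq_cycReadings List.length_ofFn,
            show K.length - m = (List.ofFn s).count false by omega]
        · rfl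
    _ = ∑ k ∈ range K.length, ∑ s : Fin K.length → Bool,
        if (List.ofFn s).count true = m then readingAt K (List.ofFn s) k else 0 := by
        rw [sum_comm]
        simp only [cycReadings, sum_ite_irrel, sum_const_zero]
    _ = ∑ k ∈ range K.length, mergeM (K.rotate k) m := sum_congr rfl fun k hk =>
        sum_readingAt_eq_mergeM (List.ne_nil_of_length_pos (Nat.zero_lt_of_lt (mem_range.mp hk)))
          m k
    _ = _ := by rw [sum_Icc_one_eq_sum_range, hperiodic.sum_range_add 1]

/-- **Lemma 6.3** of Hirose–Murahara–Ono: for a nonempty index `𝐤 = (k₁,…,k_r)` and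
`0 ≤ m ≤ r−1`,
`Σ_{i=1}^{r−m} Σ_{(l₁,…,l_{r−m}) ∈ S_m(𝐤)} (l_{i+1},…,l_{r−m},l₁,…,l_i)
 = Σ_{i=1}^{r} Σ_{□ patterns with exactly m plus signs} (k_{i+1}□⋯□k_r□k₁□⋯□k_i)`
holds in `ℛ`. -/
theorem Sm_rotation_sum (K : List ℕ) (hne : K ≠ []) (hpos : ∀ x ∈ K, 0 < x)
    (m : ℕ) (hm : m + 1 ≤ K.length) :
    (∑ i ∈ Finset.Icc 1 (K.length - m),
        Ssum K m fun l => Finsupp.single (l.rotate i) (1 : ℚ))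
      = ∑ i ∈ Finset.Icc 1 K.length, mergeM (K.rotate i) m :=
  Sm_rotation_sum_general K m
end

section
/- For every positive integer k, the following identity holds in 𝔥[[t]]: Σ_{l',l'' ≥ 0} binom(k+l''−1, l'') · (y·x^{k+l''−1}·y·x^{l'}) · t^{l'+l''} = Σ_{l ≥ 0} y·( (x^{k−1}y) ⧢ x^{l} ) · t^{l}. -/
/-- `𝔥 = ℚ⟨x,y⟩`, realized as the monoid algebra over `ℚ` of the free monoid on two
letters; letter `0` is `x` and letter `1` is `y`. -/
abbrev H : Type := MonoidAlgebra ℚ (FreeMonoid (Fin 2))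

/-- The word `u₁⋯uₙ`, as an element of `𝔥`. -/
noncomputable def word (l : List (Fin 2)) : H := MonoidAlgebra.single (FreeMonoid.ofList l) 1

/-- The letter `x ∈ 𝔥`. -/
noncomputable def xH : H := word [0]

/-- The letter `y ∈ 𝔥`. -/
noncomputable def yH : H := word [1]

/-- The shuffle product of two words, as an element of `𝔥`. -/
noncomputable def shw : List (Fin 2) → List (Fin 2) → H
  | [], w => word w
  | a :: u, [] => word (a :: u)
  | a :: u, b :: v => word [a] * shw u (b :: v) + word [b] * shw (a :: u) v
  termination_by u v => u.length + v.length

/-- The shuffle product `⧢` on `𝔥`: the `ℚ`-bilinear extension of the shuffle product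
of words. -/
noncomputable def sh (f g : H) : H :=
  Finsupp.sum f.coeff fun u c => Finsupp.sum g.coeff fun v d => (c * d) • shw u.toList v.toList

/-!
Shuffling `x^m y` with `x^n` amounts to choosing how many `i` of the `n` letters
`x` end up before the `y`, which can happen in `binom(m+i, i)` ways, so
`x^m y ⧢ x^n = Σ_{i+j=n} binom(m+i, i) x^{m+i} y x^j`. Multiplying by `y` on the left and
comparing coefficients of `t^n` (with `m = k-1`) gives the identity.
-/

open Finset

lemma word_mul (u v : List (Fin 2)) : word u * word v = word (u ++ v) := by
  simp [word, MonoidAlgebra.single_mul_single]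

lemma word_cons (a : Fin 2) (u : List (Fin 2)) : word [a] * word u = word (a :: u) :=
  word_mul [a] u

lemma xH_pow (m : ℕ) : xH ^ m = word (List.replicate m 0) := by
  induction m with
  | zero => rfl
  | succ m ih => rw [pow_succ, ih, xH, word_mul, ← List.replicate_succ']

lemma sh_word (u v : List (Fin 2)) : sh (word u) (word v) = shw u v := by
  simp [sh, word, Finsupp.sum_single_index]

lemma shw_nil_right (u : List (Fin 2)) : shw u [] = word u := by
  cases u <;> simp [shw]

lemma shw_replicate_append_singleton_replicate (a b : Fin 2) (m n : ℕ) :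
    shw (List.replicate m a ++ [b]) (List.replicate n a)
      = ∑ p ∈ antidiagonal n, ((m + p.1).choose p.1 : ℚ) •
          word (List.replicate (m + p.1) a ++ b :: List.replicate p.2 a) := by
  induction n generalizing m with
  | zero => simp [shw_nil_right]
  | succ n ihn =>
    induction m with
    | zero =>
      have ih := ihn 0
      simp only [List.replicate_zero, List.nil_append, zero_add, Nat.choose_self,
        Nat.cast_one, one_smul] at ih ⊢
      rw [List.replicate_succ, shw, shw, ← List.replicate_succ, ih, Nat.sum_antidiagonal_succ,
        mul_sum]
      simp only [List.replicate_zero, List.nil_append, word_cons, List.replicate_succ,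
        List.cons_append]
    | succ m ihm =>
      rw [List.replicate_succ, List.cons_append, List.replicate_succ, shw, ← List.replicate_succ,
        ← List.cons_append, ← List.replicate_succ, ihm, ihn, Nat.sum_antidiagonal_succ,
        Nat.sum_antidiagonal_succ, mul_add, mul_sum, mul_sum, add_assoc, ← sum_add_distrib]
      congr 1
      · simp [word_cons, List.replicate_succ]
      · refine sum_congr rfl fun p _ => ?_
        have pascal : (m + 1 + (p.1 + 1)).choose (p.1 + 1)
            = (m + (p.1 + 1)).choose (p.1 + 1) + (m + 1 + p.1).choose p.1 := by
          rw [show m + 1 + (p.1 + 1) = m + (p.1 + 1) + 1 by omega, Nat.choose_succ_succ',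
            add_comm, show m + (p.1 + 1) = m + 1 + p.1 by omega]
        simp only [mul_smul_comm, word_cons, ← List.cons_append, ← List.replicate_succ]
        rw [pascal, Nat.cast_add, add_smul, show m + 1 + p.1 + 1 = m + (p.1 + 1) + 1 by omega,
          show m + 1 + (p.1 + 1) = m + (p.1 + 1) + 1 by omega]

/-- **Equation (5.3)** of Hirose–Murahara–Ono: for a positive integer `k`, the identity
`Σ_{l',l'' ≥ 0} binom(k+l''−1,l'')·(y·x^{k+l''−1}·y·x^{l'})·t^{l'+l''}
 = Σ_{l ≥ 0} y·((x^{k−1}y) ⧢ x^l)·t^l`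
holds in `𝔥[[t]]`. -/
theorem key_id2 (k : ℕ) (hk : 0 < k) :
    (PowerSeries.mk fun n : ℕ => ∑ p ∈ Finset.HasAntidiagonal.antidiagonal n,
        ((k + p.2 - 1).choose p.2 : ℚ) • (yH * xH ^ (k + p.2 - 1) * yH * xH ^ p.1))
      = PowerSeries.mk fun l : ℕ => yH * sh (xH ^ (k - 1) * yH) (xH ^ l) := by
  obtain ⟨m, rfl⟩ : ∃ m, k = m + 1 := ⟨k - 1, by omega⟩
  refine PowerSeries.ext fun n => ?_
  rw [PowerSeries.coeff_mk, PowerSeries.coeff_mk, Nat.add_sub_cancel, xH_pow, xH_pow, yH,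
    word_mul, sh_word, shw_replicate_append_singleton_replicate, mul_sum,
    ← Nat.sum_antidiagonal_swap (M := H)]
  refine sum_congr rfl fun p _ => ?_
  rw [Prod.fst_swap, Prod.snd_swap, show m + 1 + p.1 - 1 = m + p.1 by omega, mul_smul_comm,
    xH_pow, xH_pow, word_mul, word_mul, word_mul, word_mul]
  simp
end

section
/- Let r ≤ k be positive integers and let α ⊆ I(k,r) be a cyclic equivalence class of indices of depth r and weight k. Define C := Σ_{(k₁,…,k_r)∈α} Σ_{a+b=k_r−1, a≥0, b≥1} F(1+a, k₁,…,k_{r−1}, 1+b). Then C = (−1)^{k+1} Σ_{𝐥=(l₁,…,l_r) ∈ ℤ_{≥0}^r} ũ⋆_CSF(α;𝐥)·t^{l₁+⋯+l_r} + Σ_{(k₁,…,k_r)∈α} Σ_{l=0}^{∞} F(1+l, k₁,…,k_r)·t^l − Σ_{(k₁,…,k_r)∈α} F(k₁,…,k_r, 1) in 𝔥[[t]]. -/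
open Classical in
/-- `W(X) = Σ_f δ(f⁻¹(1))·δ(f⁻¹(2))⋯δ(f⁻¹(n)) ∈ 𝔥`, the sum ranging over all
order-preserving bijections `f : X → {1,…,n}`, `n = #X`. -/
noncomputable def Wp (α : Type) [Fintype α] [PartialOrder α] (δ : α → Fin 2) : H :=
  ∑ f : α ≃ Fin (Fintype.card α),
    if Monotone (⇑f) then word (List.ofFn fun i => δ (f.symm i)) else 0

/-- The underlying set of the labeled poset `X⋆(𝐤)`: the disjoint union of the chains
`C_j = {c_{j,0} < ⋯ < c_{j,k_j−1}}`, `1 ≤ j ≤ r`. -/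
def Carrier (K : List ℕ) : Type := (j : Fin K.length) × Fin (K.get j)

instance (K : List ℕ) : Fintype (Carrier K) :=
  inferInstanceAs (Fintype ((j : Fin K.length) × Fin (K.get j)))

instance (K : List ℕ) : DecidableEq (Carrier K) :=
  inferInstanceAs (DecidableEq ((j : Fin K.length) × Fin (K.get j)))

/-- The partial order of `X⋆(𝐤)`: the order generated by the chain relations together
with the relations `c_{j+1,k_{j+1}−1} > c_{j,0}` (written out explicitly: one can jump
from the bottom of a chain to the top of a later chain provided all intermediate chains
are singletons). -/
def cle (K : List ℕ) (p q : (j : Fin K.length) × Fin (K.get j)) : Prop :=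
  (p.1 = q.1 ∧ p.2.val ≤ q.2.val) ∨
    (p.1 < q.1 ∧ p.2.val = 0 ∧ q.2.val + 1 = K.get q.1 ∧
      ∀ m : Fin K.length, p.1 < m → m < q.1 → K.get m = 1)

theorem sigEq {K : List ℕ} (p q : (j : Fin K.length) × Fin (K.get j))
    (h1 : p.1 = q.1) (h2 : p.2.val = q.2.val) : p = q := by
  obtain ⟨j, a⟩ := p
  obtain ⟨j', b⟩ := q
  have h1' : j = j' := h1
  subst h1'
  have h2' : a = b := Fin.ext h2
  rw [h2']

theorem cle_trans (K : List ℕ) (p q s : (j : Fin K.length) × Fin (K.get j))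
    (h : cle K p q) (h' : cle K q s) : cle K p s := by
  rcases h with ⟨h1, h2⟩ | ⟨h1, h2, h3, h4⟩
  · rcases h' with ⟨g1, g2⟩ | ⟨g1, g2, g3, g4⟩
    · exact Or.inl ⟨h1.trans g1, h2.trans g2⟩
    · exact Or.inr ⟨h1.le.trans_lt g1, by omega,
        g3, fun m hm1 hm2 => g4 m (h1.symm.le.trans_lt hm1) hm2⟩
  · rcases h' with ⟨g1, g2⟩ | ⟨g1, g2, g3, g4⟩
    · have hks : K.get q.1 = K.get s.1 := by rw [g1]
      have hlt : s.2.val < K.get s.1 := s.2.isLt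
      exact Or.inr ⟨h1.trans_le g1.le, h2, by omega,
        fun m hm1 hm2 => h4 m hm1 (hm2.trans_le g1.symm.le)⟩
    · refine Or.inr ⟨h1.trans g1, h2, g3, fun m hm1 hm2 => ?_⟩
      rcases lt_trichotomy m q.1 with hc | hc | hc
      · exact h4 m hm1 hc
      · rw [hc]; omega
      · exact g4 m hc hm2

theorem cle_antisymm (K : List ℕ) (p q : (j : Fin K.length) × Fin (K.get j))
    (h : cle K p q) (h' : cle K q p) : p = q := by
  rcases h with ⟨h1, h2⟩ | ⟨h1, h2, h3, h4⟩
  · rcases h' with ⟨g1, g2⟩ | ⟨g1, g2, g3, g4⟩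
    · exact sigEq p q h1 (le_antisymm h2 g2)
    · rw [h1] at g1; exact absurd g1 (lt_irrefl _)
  · rcases h' with ⟨g1, g2⟩ | ⟨g1, g2, g3, g4⟩
    · rw [g1] at h1; exact absurd h1 (lt_irrefl _)
    · exact absurd (h1.trans g1) (lt_irrefl _)

instance (K : List ℕ) : PartialOrder (Carrier K) where
  le := cle K
  le_refl p := Or.inl ⟨rfl, le_refl _⟩
  le_trans := cle_trans K
  le_antisymm := cle_antisymm K

/-- The label map of `X⋆(𝐤)`: the bottom element of each chain is labeled `y` (= `1`),
all other elements are labeled `x` (= `0`). -/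
def lab (K : List ℕ) : Carrier K → Fin 2 := fun p => if p.2.val = 0 then 1 else 0

/-- `w⋆(𝐤) := W(X⋆(𝐤))`, with `w⋆(∅) = 1`. -/
noncomputable def wstar (K : List ℕ) : H := Wp (Carrier K) (lab K)

/-- The coefficientwise shuffle product on `𝔥[[t]]`. -/
noncomputable def shP (f g : PowerSeries H) : PowerSeries H :=
  PowerSeries.mk fun n => ∑ p ∈ Finset.HasAntidiagonal.antidiagonal n,
    sh (PowerSeries.coeff p.1 f) (PowerSeries.coeff p.2 g)

/-- `F(𝐤) = Σ_{l₁,…,l_r ≥ 0} (∏_j (−1)^{k_j} binom(k_j+l_j−1,l_j)) ·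
w⋆(k_r+l_r,…,k₁+l₁) · t^{l₁+⋯+l_r} ∈ 𝔥[[t]]`, with `F(∅) = 1`. -/
noncomputable def Fser (K : List ℕ) : PowerSeries H :=
  PowerSeries.mk fun n => ∑ l ∈ Finset.Nat.antidiagonalTuple K.length n,
    (∏ j : Fin K.length, ((-1 : ℚ) ^ (K.get j) * ((K.get j + l j - 1).choose (l j) : ℚ))) •
      wstar ((List.ofFn fun j : Fin K.length => K.get j + l j).reverse)

/-- `w⋆_Ŝ(𝐤) = Σ_{i=0}^{r} w⋆(k₁,…,k_i) ⧢ F(k_{i+1},…,k_r) ∈ 𝔥[[t]]`. -/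
noncomputable def wstarS (K : List ℕ) : PowerSeries H :=
  ∑ i ∈ Finset.range (K.length + 1),
    shP (PowerSeries.C (wstar (K.take i))) (Fser (K.drop i))

/-- `ũ⋆_CSF(α;𝐥) = Σ_{(k₁,…,k_r)∈α} (∏_{s=1}^r binom(k_s+l_s−1,l_s))
Σ_{j=0}^{k₁+l₁−2} w⋆(j+1, k_r+l_r, …, k₂+l₂, k₁+l₁−j) ∈ 𝔥`, for a cyclic equivalence
class `α` of indices of depth `r` and a tuple `𝐥 ∈ ℤ_{≥0}^r`. -/
noncomputable def uCSF (r : ℕ) (α : Finset (List ℕ)) (l : Fin r → ℕ) : H :=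
  ∑ L ∈ α,
    (∏ s : Fin r, ((L.getD s.val 0 + l s - 1).choose (l s) : ℚ)) •
      ∑ j ∈ Finset.range ((List.ofFn fun s : Fin r => L.getD s.val 0 + l s).headI - 1),
        wstar (((j + 1) :: (List.ofFn fun s : Fin r => L.getD s.val 0 + l s).tail.reverse)
          ++ [(List.ofFn fun s : Fin r => L.getD s.val 0 + l s).headI - j])

/-!
Taking the coefficient of `t^n` and substituting `m_j = k_j + l_j`, every series in the identity
becomes a combination of the words `w⋆(m_d, …, m_1)` over tuples `m` of weight `n + k + 1`, with
products of the coefficients `binom(m_j - 1, m_j - k_j)` of `(X / (1 - X))^{k_j}` as weights;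
rotating the cyclic class moves the last entry `k_r` of every index to the two ends of `m`.
Splitting the head of a tuple turns `ũ⋆_CSF` into the same shape, and the identity reduces to
one between binomial weights: the Vandermonde convolution over `a + b = k_r - 1`, completed by
its term `a = k_r - 1` (which is `F(k_r, k₁, …, k_{r-1}, 1)`), is matched by the `ũ⋆_CSF` terms
and by the alternating sum over `l` in `F(1 + l, 𝐤)`, which collapses to the tuples with first
entry `1`.
-/

open Finset

/-- `[X^μ] (X / (1 - X))^κ`, so that `geomCoeff κ (κ + l) = binom(κ + l - 1, l)`. -/
def geomCoeff (κ μ : ℕ) : ℚ := if κ ≤ μ then ((μ - 1).choose (μ - κ) : ℚ) else 0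

lemma geomCoeff_add (κ l : ℕ) : geomCoeff κ (κ + l) = ((κ + l - 1).choose l : ℚ) := by
  rw [geomCoeff, if_pos (Nat.le_add_right _ _), Nat.add_sub_cancel_left]

lemma geomCoeff_of_lt {κ μ : ℕ} (h : μ < κ) : geomCoeff κ μ = 0 := if_neg (by omega)

lemma le_of_geomCoeff_ne_zero {κ μ : ℕ} (h : geomCoeff κ μ ≠ 0) : κ ≤ μ := by
  by_contra hc
  exact h (if_neg hc)

lemma geomCoeff_eq_choose {κ μ : ℕ} (hκ : 0 < κ) (hμ : 0 < μ) :
    geomCoeff κ μ = ((μ - 1).choose (κ - 1) : ℚ) := by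
  rcases le_or_gt κ μ with h | h
  · rw [geomCoeff, if_pos h, ← Nat.choose_symm (by omega : κ - 1 ≤ μ - 1)]
    congr 2
    omega
  · rw [geomCoeff_of_lt h, Nat.choose_eq_zero_of_lt (by omega), Nat.cast_zero]

lemma geomCoeff_one_add {p : ℕ} (hp : 0 < p) (l : ℕ) :
    geomCoeff (1 + l) p = ((p - 1).choose l : ℚ) := by
  rw [geomCoeff_eq_choose (by omega) hp, Nat.add_sub_cancel_left]

lemma sum_range_neg_one_pow_mul_geomCoeff {n p : ℕ} (hp : p ≤ n + 1) :
    ∑ l ∈ range (n + 1), (-1 : ℚ) ^ l * geomCoeff (1 + l) p = if p = 1 then 1 else 0 := by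
  rcases p with _ | _ | q
  · simp [geomCoeff_of_lt]
  · simp [geomCoeff_one_add, Finset.sum_range_succ', Nat.choose_zero_succ]
  · have h := Int.alternating_sum_range_choose_eq_choose (n := q) (m := n)
    rw [Nat.choose_eq_zero_of_lt (by omega), Nat.cast_zero, mul_zero] at h
    simp only [geomCoeff_one_add (Nat.succ_pos _)]
    exact_mod_cast h

/-- Vandermonde's identity, with the term `a = N - 1` split off. -/
lemma sum_range_geomCoeff_mul_geomCoeff {N : ℕ} (hN : 0 < N) (p s : ℕ) :
    ∑ a ∈ range (N - 1), geomCoeff (1 + a) p * geomCoeff (1 + (N - 1 - a)) s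
      = (if 2 ≤ p ∧ 1 ≤ s then geomCoeff N (p + s - 1) else 0)
        + (if p = 1 then geomCoeff N s else 0) - geomCoeff N p * geomCoeff 1 s := by
  rcases Nat.eq_zero_or_pos p with rfl | hp
  · simp [geomCoeff_of_lt, hN]
  rcases Nat.eq_zero_or_pos s with rfl | hs
  · simp [geomCoeff_of_lt, hN]
  obtain ⟨N, rfl⟩ : ∃ N', N = N' + 1 := ⟨N - 1, by omega⟩
  have hvand : ∑ a ∈ range (N + 1), ((p - 1).choose a * (s - 1).choose (N - a) : ℚ)
      = ((p + s - 2).choose N : ℚ) := by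
    rw [show p + s - 2 = p - 1 + (s - 1) by omega, Nat.add_choose_eq,
      Nat.sum_antidiagonal_eq_sum_range_succ (fun i j => (p - 1).choose i * (s - 1).choose j)]
    push_cast
    rfl
  rw [sum_range_succ, Nat.sub_self] at hvand
  simp only [Nat.add_sub_cancel, geomCoeff_one_add hp, geomCoeff_one_add hs,
    Nat.choose_zero_right, Nat.cast_one, mul_one, geomCoeff_eq_choose hN hp,
    geomCoeff_eq_choose one_pos hs, Nat.sub_self] at hvand ⊢
  rcases Nat.lt_or_ge 1 p with hp2 | hp1
  · rw [if_pos ⟨hp2, hs⟩, if_neg (by omega), geomCoeff_eq_choose hN (by omega),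
      show p + s - 1 - 1 = p + s - 2 by omega, Nat.add_sub_cancel]
    linarith
  · obtain rfl : p = 1 := by omega
    rw [if_neg (by omega), if_pos rfl, geomCoeff_eq_choose hN hs, Nat.add_sub_cancel]
    rw [show 1 + s - 2 = s - 1 by omega] at hvand
    linarith

/-- Compares the coefficients of `w⋆(s, …, p)` on the two sides of the theorem; `X` is the
weight of the inner entries. -/
lemma geomCoeff_weight_identity {N n p s : ℕ} (hN : 0 < N) (K : ℕ) (X : ℚ)
    (hp : X * geomCoeff N s ≠ 0 → p ≤ n + 1) :
    ∑ a ∈ range (N - 1), (-1 : ℚ) ^ K * (geomCoeff (1 + a) p * X * geomCoeff (1 + (N - 1 - a)) s)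
      = (-1 : ℚ) ^ K * (if 2 ≤ p ∧ 1 ≤ s then geomCoeff N (p + s - 1) * X else 0)
        + ∑ l ∈ range (n + 1), (-1 : ℚ) ^ (K + l) * (geomCoeff (1 + l) p * X * geomCoeff N s)
        - (-1 : ℚ) ^ K * (geomCoeff N p * X * geomCoeff 1 s) := by
  have halt : ∑ l ∈ range (n + 1), (-1 : ℚ) ^ (K + l) * (geomCoeff (1 + l) p * X * geomCoeff N s)
      = (-1 : ℚ) ^ K * (if p = 1 then X * geomCoeff N s else 0) := by
    by_cases h0 : X * geomCoeff N s = 0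
    · simp [mul_assoc, h0]
    rw [show ∑ l ∈ range (n + 1), (-1 : ℚ) ^ (K + l) * (geomCoeff (1 + l) p * X * geomCoeff N s)
        = (-1 : ℚ) ^ K * (X * geomCoeff N s) * ∑ l ∈ range (n + 1), (-1) ^ l * geomCoeff (1 + l) p
        by rw [mul_sum]; exact sum_congr rfl fun l _ => by ring,
      sum_range_neg_one_pow_mul_geomCoeff (hp h0)]
    split_ifs <;> ring
  rw [halt, ← mul_sum,
    show ∑ a ∈ range (N - 1), geomCoeff (1 + a) p * X * geomCoeff (1 + (N - 1 - a)) s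
      = X * ∑ a ∈ range (N - 1), geomCoeff (1 + a) p * geomCoeff (1 + (N - 1 - a)) s
      by rw [mul_sum]; exact sum_congr rfl fun a _ => by ring,
    sum_range_geomCoeff_mul_geomCoeff hN]
  split_ifs <;> ring

lemma sum_antidiagonalTuple_shift {V : Type*} [AddCommMonoid V] [Module ℚ V] (d n : ℕ)
    (K : Fin d → ℕ) (G : (Fin d → ℕ) → V) :
    ∑ l ∈ Nat.antidiagonalTuple d n,
        (∏ j, ((K j + l j - 1).choose (l j) : ℚ)) • G (fun j => K j + l j)
      = ∑ m ∈ Nat.antidiagonalTuple d (n + ∑ j, K j), (∏ j, geomCoeff (K j) (m j)) • G m := by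
  refine sum_of_injOn (fun l j => K j + l j) (fun l _ l' _ h => ?_) (fun l hl => ?_)
    (fun m hmem hm => ?_) (fun l _ => by simp only [geomCoeff_add])
  · funext j
    simpa using congrFun h j
  · simp only [mem_coe, Nat.mem_antidiagonalTuple, sum_add_distrib] at hl ⊢
    omega
  · obtain ⟨j, hj⟩ : ∃ j, m j < K j := by
      by_contra! hle
      refine hm ⟨fun j => m j - K j, ?_, funext fun j => Nat.add_sub_cancel' (hle j)⟩
      rw [Nat.mem_antidiagonalTuple] at hmem
      rw [mem_coe, Nat.mem_antidiagonalTuple, sum_tsub_distrib univ fun j _ => hle j]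
      omega
    rw [prod_eq_zero (mem_univ j) (geomCoeff_of_lt hj), zero_smul]

/-- `Σ_{m₁+⋯+m_d = T} c(m) · w⋆(m_d, …, m₁)`. -/
noncomputable def wstarTupleSum (d T : ℕ) : ((Fin d → ℕ) → ℚ) →ₗ[ℚ] H :=
  ∑ m ∈ Nat.antidiagonalTuple d T,
    (LinearMap.proj m : ((Fin d → ℕ) → ℚ) →ₗ[ℚ] ℚ).smulRight (wstar (List.ofFn m).reverse)

lemma wstarTupleSum_apply (d T : ℕ) (c : (Fin d → ℕ) → ℚ) :
    wstarTupleSum d T c = ∑ m ∈ Nat.antidiagonalTuple d T, c m • wstar (List.ofFn m).reverse := by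
  simp [wstarTupleSum]

lemma wstarTupleSum_congr {d T : ℕ} {c c' : (Fin d → ℕ) → ℚ}
    (h : ∀ m ∈ Nat.antidiagonalTuple d T, c m = c' m) :
    wstarTupleSum d T c = wstarTupleSum d T c' := by
  simp only [wstarTupleSum_apply]
  exact sum_congr rfl fun m hm => by rw [h m hm]

lemma coeff_Fser {d : ℕ} (K : List ℕ) (hK : K.length = d) (n : ℕ) :
    PowerSeries.coeff n (Fser K) = (-1 : ℚ) ^ K.sum •
      wstarTupleSum d (n + K.sum) fun m => ∏ j : Fin d, geomCoeff (K.getD j 0) (m j) := by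
  subst hK
  have hsum : ∑ j : Fin K.length, K.get j = K.sum := by
    conv_rhs => rw [← List.ofFn_get K, List.sum_ofFn]
  simp only [Fser, PowerSeries.coeff_mk, prod_mul_distrib, prod_pow_eq_pow_sum, mul_smul,
    ← smul_sum, wstarTupleSum_apply, List.getD_eq_getElem?_getD, List.getElem?_eq_getElem,
    Fin.is_lt, Option.getD_some, hsum]
  rw [sum_antidiagonalTuple_shift _ n K.get fun m => wstar (List.ofFn m).reverse, hsum]
  rfl

def midWeight (M : List ℕ) (m : Fin (M.length + 2) → ℕ) : ℚ :=
  ∏ i : Fin M.length, geomCoeff (M.getD i 0) (m i.succ.castSucc)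

lemma sum_fin_getD_eq_sum (M : List ℕ) : ∑ i : Fin M.length, M.getD i 0 = M.sum := by
  simp [List.getD_eq_getElem?_getD, ← List.sum_ofFn]

lemma coeff_Fser_cons_append (M : List ℕ) {u v K : ℕ} (hK : u + M.sum + v = K) (n : ℕ) :
    PowerSeries.coeff n (Fser (u :: (M ++ [v]))) = (-1 : ℚ) ^ K •
      wstarTupleSum (M.length + 2) (n + K) fun m =>
        geomCoeff u (m 0) * midWeight M m * geomCoeff v (m (Fin.last _)) := by
  have hsum : (u :: (M ++ [v])).sum = K := by
    simp only [List.sum_cons, List.sum_append, List.sum_nil]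
    omega
  rw [coeff_Fser (d := M.length + 2) _ (by simp) n, hsum]
  congr 2
  funext m
  rw [Fin.prod_univ_succ, Fin.prod_univ_castSucc, midWeight]
  simp [mul_assoc]

lemma sum_le_sum_middle_of_midWeight_ne_zero {M : List ℕ} {m : Fin (M.length + 2) → ℕ}
    (h : midWeight M m ≠ 0) : M.sum ≤ ∑ i, Fin.init (Fin.tail m) i := by
  rw [← sum_fin_getD_eq_sum]
  exact sum_le_sum fun i _ => le_of_geomCoeff_ne_zero (prod_ne_zero_iff.1 h i (mem_univ i))

section SplitHead

variable {d : ℕ}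

lemma sum_eq_head_add_sum_middle_add_last (m : Fin (d + 2) → ℕ) :
    ∑ i, m i = m 0 + (∑ i, Fin.init (Fin.tail m) i + m (Fin.last _)) := by
  rw [Fin.sum_univ_succ]
  exact congrArg _ (Fin.sum_univ_castSucc (Fin.tail m))

lemma cons_snoc_init_tail (m : Fin (d + 2) → ℕ) :
    Fin.cons (m 0) (Fin.snoc (Fin.init (Fin.tail m)) (m (Fin.last _))) = m := by
  change Fin.cons (m 0) (Fin.snoc (Fin.init (Fin.tail m)) (Fin.tail m (Fin.last d))) = m
  rw [Fin.snoc_init_self, Fin.cons_self_tail]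

/-- Splitting the head `μ₁` of a tuple into a new head `μ₁ - j ≥ 2` and a new last entry
`j + 1`. -/
lemma sum_antidiagonalTuple_split_head {V : Type*} [AddCommMonoid V] (T : ℕ)
    (F : (Fin (d + 2) → ℕ) → V) :
    ∑ μ ∈ Nat.antidiagonalTuple (d + 1) T, ∑ j ∈ range (μ 0 - 1),
        F (Fin.cons (μ 0 - j) (Fin.snoc (Fin.tail μ) (j + 1)))
      = ∑ m ∈ Nat.antidiagonalTuple (d + 2) (T + 1),
          if 2 ≤ m 0 ∧ 1 ≤ m (Fin.last _) then F m else 0 := by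
  rw [sum_sigma', ← sum_filter]
  refine sum_nbij' (fun x => Fin.cons (x.1 0 - x.2) (Fin.snoc (Fin.tail x.1) (x.2 + 1)))
    (fun m => ⟨Fin.cons (m 0 + m (Fin.last _) - 1) (Fin.init (Fin.tail m)), m (Fin.last _) - 1⟩)
    ?_ ?_ ?_ ?_ fun _ _ => rfl
  · rintro ⟨μ, j⟩ h
    simp only [mem_sigma, mem_range, Nat.mem_antidiagonalTuple, Fin.sum_univ_succ μ] at h
    simp only [mem_filter, Nat.mem_antidiagonalTuple, Fin.sum_cons, Fin.sum_snoc, Fin.cons_zero,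
      ← Fin.succ_last, Fin.cons_succ, Fin.snoc_last, Fin.tail]
    omega
  · intro m h
    simp only [mem_filter, Nat.mem_antidiagonalTuple, sum_eq_head_add_sum_middle_add_last m] at h
    simp only [mem_sigma, mem_range, Nat.mem_antidiagonalTuple, Fin.sum_cons, Fin.cons_zero]
    omega
  · rintro ⟨μ, j⟩ h
    simp only [mem_sigma, mem_range] at h
    simp only [Fin.cons_zero, ← Fin.succ_last, Fin.cons_succ, Fin.snoc_last, Fin.tail_cons,
      Fin.init_snoc]
    rw [show μ 0 - j + (j + 1) - 1 = μ 0 by omega, Nat.add_sub_cancel, Fin.cons_self_tail]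
  · intro m h
    simp only [mem_filter] at h
    conv_rhs => rw [← cons_snoc_init_tail m]
    simp only [Fin.cons_zero, Fin.tail_cons]
    rw [show m 0 + m (Fin.last _) - 1 - (m (Fin.last _) - 1) = m 0 by omega,
      Nat.sub_add_cancel h.2.2]

end SplitHead

/-- `Σ_{j=0}^{μ₁-2} w⋆(j+1, μ_r, …, μ₂, μ₁-j)`, the inner sum of `ũ⋆_CSF`. -/
noncomputable def cyclicWord {r : ℕ} (μ : Fin r → ℕ) : H :=
  ∑ j ∈ range ((List.ofFn μ).headI - 1),
    wstar (((j + 1) :: (List.ofFn μ).tail.reverse) ++ [(List.ofFn μ).headI - j])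

/-- The contribution of a single index `L` to `Σ_𝐥 ũ⋆_CSF(α; 𝐥) t^{|𝐥|}`. -/
noncomputable def cyclicSeries (r : ℕ) (L : List ℕ) : PowerSeries H :=
  PowerSeries.mk fun n => ∑ l ∈ Nat.antidiagonalTuple r n,
    (∏ s : Fin r, ((L.getD s 0 + l s - 1).choose (l s) : ℚ)) • cyclicWord fun s => L.getD s 0 + l s

lemma mk_sum_uCSF_eq_sum_cyclicSeries (r : ℕ) (α : Finset (List ℕ)) :
    PowerSeries.mk (fun n => ∑ l ∈ Nat.antidiagonalTuple r n, uCSF r α l)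
      = ∑ L ∈ α, cyclicSeries r L := by
  refine PowerSeries.ext fun n => ?_
  simp only [PowerSeries.coeff_mk, map_sum, cyclicSeries]
  exact sum_comm

lemma cyclicWord_succ {d : ℕ} (μ : Fin (d + 1) → ℕ) :
    cyclicWord μ = ∑ j ∈ range (μ 0 - 1),
      wstar (List.ofFn (Fin.cons (μ 0 - j) (Fin.snoc (Fin.tail μ) (j + 1)))).reverse := by
  rw [cyclicWord, List.ofFn_succ]
  refine sum_congr rfl fun j _ => ?_
  rw [List.ofFn_cons, List.ofFn_succ_last]
  simp only [Fin.snoc_castSucc, Fin.snoc_last, List.headI_cons, List.tail_cons,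
    List.reverse_cons, List.reverse_append, List.cons_append]
  rfl

lemma coeff_cyclicSeries (M : List ℕ) (N n : ℕ) :
    PowerSeries.coeff n (cyclicSeries (M.length + 1) (N :: M))
      = wstarTupleSum (M.length + 2) (n + (M.sum + N + 1)) fun m =>
          if 2 ≤ m 0 ∧ 1 ≤ m (Fin.last _) then
            geomCoeff N (m 0 + m (Fin.last _) - 1) * midWeight M m else 0 := by
  have hK : ∑ s : Fin (M.length + 1), (N :: M).getD s 0 = N + M.sum := by
    rw [Fin.sum_univ_succ]
    simp
  rw [cyclicSeries, PowerSeries.coeff_mk,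
    sum_antidiagonalTuple_shift _ n (fun s => (N :: M).getD s 0) cyclicWord, hK,
    show n + (M.sum + N + 1) = n + (N + M.sum) + 1 by ring, wstarTupleSum_apply]
  simp only [ite_smul, zero_smul]
  rw [← sum_antidiagonalTuple_split_head]
  refine sum_congr rfl fun μ _ => ?_
  rw [cyclicWord_succ, smul_sum]
  refine sum_congr rfl fun j hj => ?_
  rw [mem_range] at hj
  simp only [Fin.cons_zero, ← Fin.succ_last, Fin.cons_succ, Fin.snoc_last, midWeight]
  rw [show μ 0 - j + (j + 1) - 1 = μ 0 by omega, Fin.prod_univ_succ]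
  simp [Fin.tail]

theorem sum_Fser_cons_append_eq (M : List ℕ) {N : ℕ} (hN : 0 < N) :
    ∑ a ∈ range (N - 1), Fser ((1 + a) :: (M ++ [1 + (N - 1 - a)]))
      = (-1 : ℚ) ^ (M.sum + N + 1) • cyclicSeries (M.length + 1) (N :: M)
        + PowerSeries.mk (fun n => ∑ l ∈ range (n + 1),
            PowerSeries.coeff (n - l) (Fser ((1 + l) :: (M ++ [N]))))
        - Fser (N :: (M ++ [1])) := by
  refine PowerSeries.ext fun n => ?_
  set k := M.sum + N with hk
  simp only [map_add, map_sub, map_sum, PowerSeries.coeff_smul, PowerSeries.coeff_mk,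
    coeff_cyclicSeries]
  have hA : ∀ a ∈ range (N - 1),
      PowerSeries.coeff n (Fser ((1 + a) :: (M ++ [1 + (N - 1 - a)])))
        = wstarTupleSum _ (n + (k + 1)) ((-1 : ℚ) ^ (k + 1) • fun m =>
            geomCoeff (1 + a) (m 0) * midWeight M m
              * geomCoeff (1 + (N - 1 - a)) (m (Fin.last _))) := by
    intro a ha
    rw [mem_range] at ha
    rw [coeff_Fser_cons_append M (K := k + 1) (by omega), map_smul]
  have hB : ∀ l ∈ range (n + 1),
      PowerSeries.coeff (n - l) (Fser ((1 + l) :: (M ++ [N])))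
        = wstarTupleSum _ (n + (k + 1)) ((-1 : ℚ) ^ (k + 1 + l) • fun m =>
            geomCoeff (1 + l) (m 0) * midWeight M m * geomCoeff N (m (Fin.last _))) := by
    intro l hl
    rw [mem_range] at hl
    rw [coeff_Fser_cons_append M (K := k + 1 + l) (by omega),
      show n - l + (k + 1 + l) = n + (k + 1) by omega, map_smul]
  rw [sum_congr rfl hA, sum_congr rfl hB, coeff_Fser_cons_append M (K := k + 1) (by omega),
    ← map_smul, ← map_smul, ← map_sum, ← map_sum, ← map_add, ← map_sub]
  refine wstarTupleSum_congr fun m hm => ?_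
  simp only [Finset.sum_apply, Pi.add_apply, Pi.sub_apply, Pi.smul_apply, smul_eq_mul]
  refine geomCoeff_weight_identity hN (k + 1) (midWeight M m) fun h => ?_
  have hX := sum_le_sum_middle_of_midWeight_ne_zero (left_ne_zero_of_mul h)
  have hs := le_of_geomCoeff_ne_zero (right_ne_zero_of_mul h)
  rw [Nat.mem_antidiagonalTuple, sum_eq_head_add_sum_middle_add_last] at hm
  omega

lemma sum_rotate_eq_sum {ι V : Type*} [AddCommMonoid V] {α : Finset (List ι)}
    (hα : ∀ L ∈ α, ∀ i, L.rotate i ∈ α) (f : List ι → V) (i : ℕ) :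
    ∑ L ∈ α, f (L.rotate i) = ∑ L ∈ α, f L := by
  classical
  have hinj : Set.InjOn (fun L : List ι => L.rotate i) α :=
    (List.rotate_injective i).injOn
  have himage : α.image (fun L => L.rotate i) = α :=
    eq_of_subset_of_card_le (image_subset_iff.2 fun L hL => hα L hL i) (card_image_of_injOn hinj).ge
  rw [← sum_image hinj, himage]

theorem calc_of_C_general (r k : ℕ) (hr : 0 < r)
    (K₀ : List ℕ) (hlen : K₀.length = r) (hsum : K₀.sum = k) (hpos : ∀ x ∈ K₀, 0 < x)
    (α : Finset (List ℕ)) (hα : ∀ L, L ∈ α ↔ ∃ i, L = K₀.rotate i) :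
    (∑ L ∈ α, ∑ a ∈ Finset.range (L.getLastD 0 - 1),
        Fser ((1 + a) :: (L.dropLast ++ [1 + (L.getLastD 0 - 1 - a)])))
      = (-1 : ℚ) ^ (k + 1) • PowerSeries.mk (fun n =>
            ∑ l ∈ Finset.Nat.antidiagonalTuple r n, uCSF r α l)
        + (∑ L ∈ α, PowerSeries.mk fun n => ∑ l ∈ Finset.range (n + 1),
            PowerSeries.coeff (n - l) (Fser ((1 + l) :: L)))
        - ∑ L ∈ α, Fser (L ++ [1]) := by
  have hrot : ∀ L ∈ α, ∀ i, L.rotate i ∈ α := fun L hL i => by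
    obtain ⟨j, rfl⟩ := (hα L).1 hL
    exact (hα _).2 ⟨j + i, List.rotate_rotate K₀ j i⟩
  rw [mk_sum_uCSF_eq_sum_cyclicSeries, ← sum_rotate_eq_sum hrot (cyclicSeries r) (r - 1),
    ← sum_rotate_eq_sum hrot (fun L => Fser (L ++ [1])) (r - 1), smul_sum,
    ← sum_add_distrib, ← sum_sub_distrib]
  refine sum_congr rfl fun L hL => ?_
  obtain ⟨j, rfl⟩ := (hα L).1 hL
  obtain ⟨M, N, hMN⟩ := (List.eq_nil_or_concat' (K₀.rotate j)).resolve_left fun h => by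
    simpa [hlen, hr.ne'] using congrArg List.length h
  have hMr : M.length + 1 = r := by rw [← hlen, ← List.length_rotate K₀ j, hMN]; simp
  have hMk : M.sum + N = k := by rw [← hsum, ← (List.rotate_perm K₀ j).sum_eq, hMN]; simp
  have hN : 0 < N := hpos N (List.mem_rotate.1 (by rw [hMN]; simp))
  subst hMr hMk
  rw [hMN, List.getLastD_concat, List.dropLast_concat, Nat.add_sub_cancel,
    List.rotate_append_length_eq, List.singleton_append, List.cons_append]
  exact sum_Fser_cons_append_eq M hN

/-- **Lemma 5.3** of Hirose–Murahara–Ono: for a cyclic equivalence class `α` of indices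
of depth `r` and weight `k`, with
`C = Σ_{(k₁,…,k_r)∈α} Σ_{a+b=k_r−1, a≥0, b≥1} F(1+a, k₁,…,k_{r−1}, 1+b)`,
one has
`C = (−1)^{k+1} Σ_{𝐥 ∈ ℤ_{≥0}^r} ũ⋆_CSF(α;𝐥)·t^{l₁+⋯+l_r}
  + Σ_{(k₁,…,k_r)∈α} Σ_{l=0}^∞ F(1+l,k₁,…,k_r)·t^l
  − Σ_{(k₁,…,k_r)∈α} F(k₁,…,k_r,1)` in `𝔥[[t]]`. -/
theorem calc_of_C (r k : ℕ) (hr : 0 < r) (hrk : r ≤ k)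
    (K₀ : List ℕ) (hlen : K₀.length = r) (hsum : K₀.sum = k) (hpos : ∀ x ∈ K₀, 0 < x)
    (α : Finset (List ℕ)) (hα : ∀ L, L ∈ α ↔ ∃ i, L = K₀.rotate i) :
    (∑ L ∈ α, ∑ a ∈ Finset.range (L.getLastD 0 - 1),
        Fser ((1 + a) :: (L.dropLast ++ [1 + (L.getLastD 0 - 1 - a)])))
      = (-1 : ℚ) ^ (k + 1) • PowerSeries.mk (fun n =>
            ∑ l ∈ Finset.Nat.antidiagonalTuple r n, uCSF r α l)
        + (∑ L ∈ α, PowerSeries.mk fun n => ∑ l ∈ Finset.range (n + 1),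
            PowerSeries.coeff (n - l) (Fser ((1 + l) :: L)))
        - ∑ L ∈ α, Fser (L ++ [1]) :=
  calc_of_C_general r k hr K₀ hlen hsum hpos α hα
end
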